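/- Let a, b, ε be real with 0 ≤ a < b ≤ 1 and 0 < ε < 1. There exists n = O(log(1/ε)/(b-a)²) and a threshold k = ⌈n(a+b)/2⌉ such that: (i) if Y_1,...,Y_n are i.i.d. Bernoulli(q) with q ≥ b, then Pr[∑ Y_i ≥ k] ≥ 1 - ε; and (ii) if X_1,...,X_n are Boolean random variables with Pr[∀ i∈S, X_i=1] ≤ a^{|S|} for all S, then Pr[∑ X_i ≥ k] ≤ ε. -/

import Mathlib

open MeasureTheory Real ProbabilityTheory

/-!
Completeness is Hoeffding's inequality for the independent repetitions. Soundness is the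
Impagliazzo–Kabanets argument: for a `0/1`-valued variable `exp (t X) = 1 + (exp t - 1) X`, so
expanding `∏ i, (1 + (exp t - 1) X i)` over subsets and bounding each subset product by `a ^ |S|`
dominates the moment generating function of `∑ i, X i` by that of a binomial variable,
`(1 - a + a exp t) ^ n`. The Chernoff bound together with Hoeffding's lemma then gives the same
tail `exp (-2 n γ²)` as in the independent case. With `γ = (b - a) / 2`, the threshold
`k = ⌈n (a + b) / 2⌉` sits `γ n` away from both `a n` and `b n`, and
`n ≥ 2 log (1 / ε) / (b - a)²` makes both tails at most `ε`.
-/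

lemma one_sub_add_mul_exp_le {θ : ℝ} (h0 : 0 ≤ θ) (h1 : θ ≤ 1) (t : ℝ) :
    1 - θ + θ * exp t ≤ exp (θ * t + t ^ 2 / 8) := by
  set μ : Measure ℝ := bernoulliMeasure 1 0 ⟨θ, h0, h1⟩
  have hIcc : ∀ᵐ x ∂μ, id x ∈ Set.Icc (0 : ℝ) 1 :=
    ae_iff.2 (bernoulliMeasure_apply_of_notMem_of_notMem _ measurableSet_Icc.compl
      (by simp) (by simp))
  have hmgf := (hasSubgaussianMGF_of_mem_Icc aemeasurable_id hIcc).mgf_le t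
  have hmean : μ[id] = θ := by simp [μ, integral_bernoulliMeasure]
  have hcalc : mgf (fun x => id x - μ[id]) μ t = exp (-(θ * t)) * (1 - θ + θ * exp t) := by
    rw [hmean]
    simp only [mgf, μ, integral_bernoulliMeasure, id, smul_eq_mul]
    rw [show t * (1 - θ) = -(θ * t) + t by ring, show t * (0 - θ) = -(θ * t) by ring, exp_add]
    ring
  have hc : (((‖(1 : ℝ) - 0‖₊ / 2) ^ 2 : NNReal) : ℝ) = 1 / 4 := by norm_num
  rw [hcalc, hc] at hmgf
  calc 1 - θ + θ * exp t = exp (θ * t) * (exp (-(θ * t)) * (1 - θ + θ * exp t)) := by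
        rw [← mul_assoc, ← exp_add, add_neg_cancel, exp_zero, one_mul]
    _ ≤ exp (θ * t) * exp (1 / 4 * t ^ 2 / 2) := by gcongr
    _ = exp (θ * t + t ^ 2 / 8) := by rw [← exp_add]; ring_nf

lemma prod_cast_eq_indicator {Ω ι : Type*} {X : ι → Ω → ℕ}
    (h01 : ∀ i ω, X i ω = 0 ∨ X i ω = 1) (S : Finset ι) (ω : Ω) :
    ∏ i ∈ S, (X i ω : ℝ) = Set.indicator {ω | ∀ i ∈ S, X i ω = 1} 1 ω := by
  rw [Set.indicator_apply]
  split_ifs with h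
  · exact Finset.prod_eq_one fun i hi => by simp [h i hi]
  · obtain ⟨i, hi, hne⟩ : ∃ i ∈ S, X i ω ≠ 1 := by simpa using h
    exact Finset.prod_eq_zero hi (by simp [(h01 i ω).resolve_right hne])

lemma exp_mul_natCast_of_eq_zero_or_eq_one {x : ℕ} (hx : x = 0 ∨ x = 1) (t : ℝ) :
    exp (t * x) = 1 + (exp t - 1) * x := by
  rcases hx with rfl | rfl <;> simp

section

variable {Ω ι : Type*} [MeasurableSpace Ω] {μ : Measure Ω}

lemma measurableSet_setOf_forall_eq_one {X : ι → Ω → ℕ} (hX : ∀ i, Measurable (X i))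
    (S : Finset ι) : MeasurableSet {ω | ∀ i ∈ S, X i ω = 1} := by
  simp only [Set.ofPred_forall]
  exact Finset.measurableSet_biInter S fun i _ => hX i (measurableSet_singleton 1)

lemma integral_prod_cast_eq_measureReal {X : ι → Ω → ℕ} (hX : ∀ i, Measurable (X i))
    (h01 : ∀ i ω, X i ω = 0 ∨ X i ω = 1) (S : Finset ι) :
    ∫ ω, ∏ i ∈ S, (X i ω : ℝ) ∂μ = μ.real {ω | ∀ i ∈ S, X i ω = 1} := by
  simp_rw [prod_cast_eq_indicator h01 S]
  exact integral_indicator_one (measurableSet_setOf_forall_eq_one hX S)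

variable [Fintype ι]

theorem measureReal_sum_le_sub_le_exp [IsProbabilityMeasure μ] {Y : ι → Ω → ℝ}
    (hY : ∀ i, AEMeasurable (Y i) μ) (hind : iIndepFun Y μ)
    (h01 : ∀ i, ∀ᵐ ω ∂μ, Y i ω ∈ Set.Icc 0 1) {γ : ℝ} (hγ : 0 ≤ γ) :
    μ.real {ω | ∑ i, Y i ω ≤ ∑ i, μ[Y i] - Fintype.card ι * γ}
      ≤ exp (-2 * Fintype.card ι * γ ^ 2) := by
  have hsub (i : ι) : HasSubgaussianMGF (fun ω => μ[Y i] - Y i ω) (1 / 4) μ := by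
    convert (hasSubgaussianMGF_of_mem_Icc (hY i) (h01 i)).neg using 1
    · ext ω; simp
    · norm_num
  have hindZ : iIndepFun (fun i ω => μ[Y i] - Y i ω) μ := by
    exact hind.comp (fun i y => μ[Y i] - y) fun _ => by fun_prop
  have hoeff := HasSubgaussianMGF.measure_sum_ge_le_of_iIndepFun hindZ (s := Finset.univ)
    (fun i _ => hsub i) (by positivity : 0 ≤ Fintype.card ι * γ)
  have hset : {ω | ∑ i, Y i ω ≤ ∑ i, μ[Y i] - Fintype.card ι * γ}
      = {ω | Fintype.card ι * γ ≤ ∑ i, (μ[Y i] - Y i ω)} := by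
    ext ω
    simp only [Set.mem_ofPred_eq, Finset.sum_sub_distrib]
    constructor <;> intro h <;> linarith
  rw [hset]
  refine hoeff.trans_eq ?_
  rcases Nat.eq_zero_or_pos (Fintype.card ι) with h | h
  · simp [h]
  · simp only [Finset.sum_const, Finset.card_univ, nsmul_eq_mul, NNReal.coe_mul]
    push_cast
    field_simp
    ring_nf

theorem one_sub_exp_le_measureReal_le_sum [IsProbabilityMeasure μ] {Y : ι → Ω → ℕ}
    (hY : ∀ i, Measurable (Y i)) (h01 : ∀ i ω, Y i ω = 0 ∨ Y i ω = 1) (hind : iIndepFun Y μ)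
    {q γ : ℝ} (hγ : 0 ≤ γ) (hq : ∀ i, μ.real {ω | Y i ω = 1} = q) {k : ℕ}
    (hk : (k : ℝ) - 1 ≤ (q - γ) * Fintype.card ι) :
    1 - exp (-2 * Fintype.card ι * γ ^ 2) ≤ μ.real {ω | k ≤ ∑ i, Y i ω} := by
  have hmean (i : ι) : μ[fun ω => (Y i ω : ℝ)] = q := by
    simpa [hq] using integral_prod_cast_eq_measureReal (μ := μ) hY h01 {i}
  have htail := measureReal_sum_le_sub_le_exp (μ := μ) (Y := fun i ω => (Y i ω : ℝ))
    (fun i => by fun_prop) (hind.comp (fun _ y => (y : ℝ)) fun _ => by fun_prop)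
    (fun i => ae_of_all _ fun ω => by rcases h01 i ω with h | h <;> simp [h]) hγ
  simp only [hmean, Finset.sum_const, Finset.card_univ, nsmul_eq_mul] at htail
  have hcompl : {ω | k ≤ ∑ i, Y i ω}ᶜ
      ⊆ {ω | ∑ i, (Y i ω : ℝ) ≤ Fintype.card ι * q - Fintype.card ι * γ} := by
    intro ω hω
    have hlt : ∑ i, Y i ω + 1 ≤ k := by simpa using hω
    have : (∑ i, (Y i ω : ℝ)) + 1 ≤ k := by exact_mod_cast hlt
    simp only [Set.mem_ofPred_eq]
    linarith
  have hmeas : MeasurableSet {ω | k ≤ ∑ i, Y i ω} :=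
    measurableSet_le measurable_const (by fun_prop)
  linarith [measureReal_mono (μ := μ) hcompl, probReal_compl_eq_one_sub (μ := μ) hmeas]

variable [IsFiniteMeasure μ] {X : ι → Ω → ℕ}

lemma integral_prod_one_add_mul_le (hX : ∀ i, Measurable (X i))
    (h01 : ∀ i ω, X i ω = 0 ∨ X i ω = 1) {a c : ℝ} (hc : 0 ≤ c)
    (hS : ∀ S : Finset ι, μ.real {ω | ∀ i ∈ S, X i ω = 1} ≤ a ^ S.card) :
    ∫ ω, ∏ i, (1 + c * X i ω) ∂μ ≤ (1 + c * a) ^ Fintype.card ι := by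
  have hint (S : Finset ι) : Integrable (fun ω => ∏ i ∈ S, (X i ω : ℝ)) μ := by
    simp_rw [prod_cast_eq_indicator h01 S]
    exact (integrable_const 1).indicator (measurableSet_setOf_forall_eq_one hX S)
  simp_rw [Finset.prod_one_add, Finset.prod_mul_distrib, Finset.prod_const]
  rw [integral_finsetSum _ fun S _ => (hint S).const_mul _]
  calc ∑ S ∈ Finset.univ.powerset, ∫ ω, c ^ S.card * ∏ i ∈ S, (X i ω : ℝ) ∂μ
      ≤ ∑ S ∈ (Finset.univ : Finset ι).powerset, ∏ i ∈ S, (c * a) := by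
        gcongr with S
        rw [integral_const_mul, integral_prod_cast_eq_measureReal hX h01, Finset.prod_const,
          mul_pow]
        exact mul_le_mul_of_nonneg_left (hS S) (pow_nonneg hc _)
    _ = (1 + c * a) ^ Fintype.card ι := by
        rw [← Finset.prod_one_add, Finset.prod_const, Finset.card_univ]

lemma mgf_sum_le_pow (hX : ∀ i, Measurable (X i))
    (h01 : ∀ i ω, X i ω = 0 ∨ X i ω = 1) {a t : ℝ} (ht : 0 ≤ t)
    (hS : ∀ S : Finset ι, μ.real {ω | ∀ i ∈ S, X i ω = 1} ≤ a ^ S.card) :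
    mgf (fun ω => ∑ i, (X i ω : ℝ)) μ t ≤ (1 - a + a * exp t) ^ Fintype.card ι := by
  have hexp (ω : Ω) : exp (t * ∑ i, (X i ω : ℝ)) = ∏ i, (1 + (exp t - 1) * X i ω) := by
    rw [Finset.mul_sum, exp_sum]
    exact Finset.prod_congr rfl fun i _ => exp_mul_natCast_of_eq_zero_or_eq_one (h01 i ω) t
  simp only [mgf, hexp]
  convert integral_prod_one_add_mul_le hX h01 (sub_nonneg.2 (one_le_exp ht)) hS using 2
  ring

theorem measureReal_le_sum_le_exp (hX : ∀ i, Measurable (X i))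
    (h01 : ∀ i ω, X i ω = 0 ∨ X i ω = 1) {a γ k : ℝ} (ha : 0 ≤ a) (ha1 : a ≤ 1) (hγ : 0 ≤ γ)
    (hk : (a + γ) * Fintype.card ι ≤ k)
    (hS : ∀ S : Finset ι, μ.real {ω | ∀ i ∈ S, X i ω = 1} ≤ a ^ S.card) :
    μ.real {ω | k ≤ ∑ i, (X i ω : ℝ)} ≤ exp (-2 * Fintype.card ι * γ ^ 2) := by
  set n : ℝ := (Fintype.card ι : ℝ)
  have hint : Integrable (fun ω => exp (4 * γ * ∑ i, (X i ω : ℝ))) μ := by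
    refine Integrable.of_bound (by fun_prop) (exp (4 * γ * n)) (ae_of_all _ fun ω => ?_)
    rw [norm_eq_abs, abs_exp]
    gcongr
    calc ∑ i, (X i ω : ℝ) ≤ ∑ _i : ι, 1 :=
          Finset.sum_le_sum fun i _ => by rcases h01 i ω with h | h <;> simp [h]
      _ = n := by simp [n]
  calc μ.real {ω | k ≤ ∑ i, (X i ω : ℝ)}
      ≤ exp (-(4 * γ) * k) * mgf (fun ω => ∑ i, (X i ω : ℝ)) μ (4 * γ) :=
        measure_ge_le_exp_mul_mgf k (by positivity) hint
    _ ≤ exp (-(4 * γ) * k) * exp (a * (4 * γ) + (4 * γ) ^ 2 / 8) ^ Fintype.card ι := by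
        gcongr
        refine (mgf_sum_le_pow hX h01 (by positivity) hS).trans ?_
        gcongr
        exact one_sub_add_mul_exp_le ha ha1 _
    _ ≤ exp (-2 * n * γ ^ 2) := by
        rw [← exp_nat_mul, ← exp_add]
        gcongr
        nlinarith

end

theorem error_reduction_parallel_repetition
    (a b ε : ℝ) (ha : 0 ≤ a) (hab : a < b) (hb : b ≤ 1)
    (hε0 : 0 < ε) (hε1 : ε < 1) :
    ∃ (n k : ℕ), (n : ℝ) ≤ 2 * Real.log (1 / ε) / (b - a) ^ 2 + 1 ∧
      k = ⌈(n : ℝ) * (a + b) / 2⌉₊ ∧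
      (∀ (Ω : Type) [Fintype Ω] [MeasurableSpace Ω] [MeasurableSingletonClass Ω]
        (μ : Measure Ω) [IsProbabilityMeasure μ]
        (Y : Fin n → Ω → ℕ), (∀ i ω, Y i ω = 0 ∨ Y i ω = 1) →
        iIndepFun Y μ →
        ∀ q : ℝ, b ≤ q → (∀ i, (μ {ω | Y i ω = 1}).toReal = q) →
        1 - ε ≤ (μ {ω | k ≤ ∑ i, Y i ω}).toReal) ∧
      (∀ (Ω : Type) [Fintype Ω] [MeasurableSpace Ω] [MeasurableSingletonClass Ω]
        (μ : Measure Ω) [IsProbabilityMeasure μ]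
        (X : Fin n → Ω → ℕ), (∀ i ω, X i ω = 0 ∨ X i ω = 1) →
        (∀ S : Finset (Fin n),
          (μ {ω | ∀ i ∈ S, X i ω = 1}).toReal ≤ a ^ S.card) →
        (μ {ω | k ≤ ∑ i, X i ω}).toReal ≤ ε) := by
  have hγ : 0 ≤ (b - a) / 2 := by linarith
  have hL : 0 < log (1 / ε) := log_pos (one_lt_one_div hε0 hε1)
  set n := ⌈2 * log (1 / ε) / (b - a) ^ 2⌉₊
  have htail : exp (-2 * n * ((b - a) / 2) ^ 2) ≤ ε := by
    have hn : 2 * log (1 / ε) ≤ n * (b - a) ^ 2 :=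
      (div_le_iff₀ (by nlinarith)).1 (Nat.le_ceil _)
    rw [one_div, log_inv] at hn
    calc exp (-2 * n * ((b - a) / 2) ^ 2) ≤ exp (log ε) := exp_le_exp.2 (by nlinarith)
      _ = ε := exp_log hε0
  set k := ⌈(n : ℝ) * (a + b) / 2⌉₊
  have hk_ge : (n : ℝ) * (a + b) / 2 ≤ k := Nat.le_ceil _
  have hk_lt : (k : ℝ) < n * (a + b) / 2 + 1 :=
    Nat.ceil_lt_add_one (div_nonneg (mul_nonneg n.cast_nonneg (by linarith)) zero_le_two)
  refine ⟨n, k, (Nat.ceil_lt_add_one (by positivity)).le, rfl, ?_, ?_⟩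
  · intro Ω _ _ _ μ _ Y h01 hind q hbq hq
    have := one_sub_exp_le_measureReal_le_sum (fun i => measurable_of_finite _) h01 hind hγ hq
      (k := k) (by rw [Fintype.card_fin]; nlinarith)
    rw [Fintype.card_fin] at this
    exact le_trans (by linarith) this
  · intro Ω _ _ _ μ _ X h01 hS
    have := measureReal_le_sum_le_exp (fun i => measurable_of_finite _) h01 ha (by linarith) hγ
      (k := k) (by rw [Fintype.card_fin]; nlinarith) hS
    simp only [Fintype.card_fin, ← Nat.cast_sum, Nat.cast_le] at this
    exact this.trans htail
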